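/- Theorem 1 (global convergence of the GRESH iteration, exact inner step): In the surrogate setup, assume in addition that every entry of λ_Ω is strictly positive and that τ > ‖W‖₂. Then f attains its infimum over 𝒮, and for every starting point Ω⁽⁰⁾ ∈ 𝒮 the sequence defined by letting Ω^{(i+1)} be the (unique) minimizer of g(·, Ω^{(i)}) over 𝒮 converges (in ℝ^{(p+1)×p}) to a global minimizer of f over 𝒮. -/

import Mathlib

open Matrix
open scoped Classical

noncomputable section

/-- Squared Euclidean norm of a vector. -/
def sqnorm {ι : Type*} [Fintype ι] (v : ι → ℝ) : ℝ := ∑ i, v i ^ 2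

/-- Spectral norm (ℓ₂ operator norm) of a real matrix:
the supremum of `‖A v‖₂` over vectors `v` with `‖v‖₂ ≤ 1`. -/
def specNorm {ι κ : Type*} [Fintype ι] [Fintype κ] (A : Matrix ι κ ℝ) : ℝ :=
  sSup {c : ℝ | ∃ v : κ → ℝ, sqnorm v ≤ 1 ∧ c = Real.sqrt (sqnorm (A.mulVec v))}

/-- (Columnwise) vectorization of `Ω ∈ ℝ^{(p+1)×p}`, using the product index set
`Fin (p+1) × Fin p` for `ℝ^{(p+1)p}`. -/
def vecM {p : ℕ} (Ω : Matrix (Fin (p + 1)) (Fin p) ℝ) : Fin (p + 1) × Fin p → ℝ :=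
  fun ik => Ω ik.1 ik.2

/-- The convex penalty
`P(Ω) = Σ_j (λ_b)_j |b_j| + Σ_{j,k} (Λ_Φ)_{jk} |Φ_{jk}| + Σ_k (λ_Ω)_k ‖Ω[:,k]‖₂`,
where `Ω = [b, Φᵀ]ᵀ`, i.e. `b_j = Ω 0 j` and `Φ j k = Ω k.succ j`. -/
def Pen {p : ℕ} (lb : Fin p → ℝ) (LPhi : Matrix (Fin p) (Fin p) ℝ) (lO : Fin p → ℝ)
    (Ω : Matrix (Fin (p + 1)) (Fin p) ℝ) : ℝ :=
  (∑ j, lb j * |Ω 0 j|) + (∑ j, ∑ k, LPhi j k * |Ω k.succ j|)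
    + ∑ k, lO k * Real.sqrt (∑ i, Ω i k ^ 2)

/-- The quadratic loss `ℓ(Ω) = (1/2)‖y − W vec(Ω)‖₂²`. -/
def lossL {n p : ℕ} (W : Matrix (Fin n) (Fin (p + 1) × Fin p) ℝ) (y : Fin n → ℝ)
    (Ω : Matrix (Fin (p + 1)) (Fin p) ℝ) : ℝ :=
  (1 / 2) * ∑ i, (y i - W.mulVec (vecM Ω) i) ^ 2

/-- The objective `f(Ω) = ℓ(Ω) + P(Ω)`. -/
def fObj {n p : ℕ} (W : Matrix (Fin n) (Fin (p + 1) × Fin p) ℝ) (y : Fin n → ℝ)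
    (lb : Fin p → ℝ) (LPhi : Matrix (Fin p) (Fin p) ℝ) (lO : Fin p → ℝ)
    (Ω : Matrix (Fin (p + 1)) (Fin p) ℝ) : ℝ :=
  lossL W y Ω + Pen lb LPhi lO Ω

/-- The surrogate
`g(Ω, Ω') = ℓ(Ω') − ⟨Wᵀ(y − W vec Ω'), vec Ω − vec Ω'⟩ + (τ²/2)‖Ω − Ω'‖_F² + P(Ω)`. -/
def gSur {n p : ℕ} (W : Matrix (Fin n) (Fin (p + 1) × Fin p) ℝ) (y : Fin n → ℝ)
    (lb : Fin p → ℝ) (LPhi : Matrix (Fin p) (Fin p) ℝ) (lO : Fin p → ℝ) (τ : ℝ)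
    (Ω Ω' : Matrix (Fin (p + 1)) (Fin p) ℝ) : ℝ :=
  lossL W y Ω'
    - (∑ u : Fin (p + 1) × Fin p,
        Wᵀ.mulVec (fun i => y i - W.mulVec (vecM Ω') i) u * (vecM Ω u - vecM Ω' u))
    + (τ ^ 2 / 2) * (∑ i, ∑ k, (Ω i k - Ω' i k) ^ 2)
    + Pen lb LPhi lO Ω

/-- The feasible set `𝒮 = {Ω = [b, Φᵀ]ᵀ : Φ = Φᵀ}`. -/
def Sfeas (p : ℕ) : Set (Matrix (Fin (p + 1)) (Fin p) ℝ) :=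
  {Ω | ∀ j k : Fin p, Ω j.succ k = Ω k.succ j}


/-!
Since `τ > ‖W‖₂`, the surrogate majorizes the objective, `f ≤ g(·, Ω')`, and exceeds it by at
most `(τ²/2)‖Ω − Ω'‖_F²`; moreover `g(·, Ω')` is `τ²`-strongly convex, so it grows quadratically
away from its minimizer over the convex set `𝒮`. Together these give, for every `Z ∈ 𝒮`,
`f(Ω⁽ⁱ⁺¹⁾) + (τ²/2)‖Ω⁽ⁱ⁺¹⁾ − Z‖² ≤ f(Z) + (τ²/2)‖Ω⁽ⁱ⁾ − Z‖²`.
A minimizer of `f` exists because `λ_Ω > 0` makes `f` coercive. Taking `Z` a minimizer shows that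
the iterates stay bounded and `f(Ω⁽ⁱ⁾) → min f`, so every cluster point is a minimizer; taking `Z`
such a cluster point, the distances to it decrease, hence the whole sequence converges to it.
-/

open Filter Topology Set

section Fejer

variable {α : Type*} [MetricSpace α] {f : α → ℝ} {S : Set α} {c : ℝ} {x : ℕ → α} {z : α}

theorem antitone_dist_of_step (hc : 0 < c)
    (hstep : ∀ i, f (x (i + 1)) + c * dist (x (i + 1)) z ^ 2 ≤ f z + c * dist (x i) z ^ 2)
    (hz : ∀ i, f z ≤ f (x (i + 1))) : Antitone fun i => dist (x i) z := by
  refine antitone_nat_of_succ_le fun i => ?_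
  have : dist (x (i + 1)) z ^ 2 ≤ dist (x i) z ^ 2 :=
    le_of_mul_le_mul_left (by linarith [hstep i, hz i]) hc
  exact (pow_le_pow_iff_left₀ dist_nonneg dist_nonneg two_ne_zero).1 this

theorem tendsto_apply_of_step (hc : 0 ≤ c)
    (hstep : ∀ i, f (x (i + 1)) + c * dist (x (i + 1)) z ^ 2 ≤ f z + c * dist (x i) z ^ 2)
    (hz : ∀ i, f z ≤ f (x (i + 1))) : Tendsto (fun i => f (x i)) atTop (𝓝 (f z)) := by
  set e : ℕ → ℝ := fun i => c * dist (x i) z ^ 2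
  have he : Antitone e := antitone_nat_of_succ_le fun i => by linarith [hstep i, hz i]
  have hlim : Tendsto e atTop (𝓝 (⨅ i, e i)) :=
    tendsto_atTop_ciInf he ⟨0, by rintro _ ⟨i, rfl⟩; positivity⟩
  -- the decrease `e i - e (i + 1)` dominates the excess `f (x (i + 1)) - f z`
  have hdecr : Tendsto (fun i => f z + (e i - e (i + 1))) atTop (𝓝 (f z)) := by
    simpa using (hlim.sub (hlim.comp (tendsto_add_atTop_nat 1))).const_add (f z)
  refine (tendsto_add_atTop_iff_nat 1).1 <|
    tendsto_of_tendsto_of_tendsto_of_le_of_le tendsto_const_nhds hdecr hz fun i => ?_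
  linarith [hstep i]

theorem exists_isMinOn_tendsto_of_step [ProperSpace α] (hc : 0 < c) (hf : Continuous f)
    (hS : IsClosed S) (hx : ∀ i, x i ∈ S)
    (hstep : ∀ z ∈ S, ∀ i, f (x (i + 1)) + c * dist (x (i + 1)) z ^ 2 ≤ f z + c * dist (x i) z ^ 2)
    (hmin : ∃ z ∈ S, IsMinOn f S z) :
    ∃ L ∈ S, IsMinOn f S L ∧ Tendsto x atTop (𝓝 L) := by
  obtain ⟨z, hzS, hz⟩ := hmin
  have hbelow : ∀ w, IsMinOn f S w → ∀ i, f w ≤ f (x (i + 1)) := fun w hw i => hw (hx (i + 1))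
  have hbdd : ∀ i, x i ∈ Metric.closedBall z (dist (x 0) z) := fun i =>
    antitone_dist_of_step hc (hstep z hzS) (hbelow z hz) (Nat.zero_le i)
  obtain ⟨L, -, φ, hφ, hxφ⟩ := (isCompact_closedBall z _).tendsto_subseq hbdd
  have hL : L ∈ S := hS.mem_of_tendsto hxφ (Eventually.of_forall fun i => hx (φ i))
  have hfL : f L = f z := tendsto_nhds_unique ((hf.tendsto L).comp hxφ)
    ((tendsto_apply_of_step hc.le (hstep z hzS) (hbelow z hz)).comp hφ.tendsto_atTop)
  have hLmin : IsMinOn f S L := fun w hw => by rw [Set.mem_ofPred_eq, hfL]; exact hz hw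
  refine ⟨L, hL, hLmin, tendsto_iff_dist_tendsto_zero.2 ?_⟩
  exact (tendsto_iff_tendsto_subseq_of_antitone
    (antitone_dist_of_step hc (hstep L hL) (hbelow L hLmin)) hφ.tendsto_atTop).2
    (tendsto_iff_dist_tendsto_zero.1 hxφ)

end Fejer

theorem StrongConvexOn.subset {E : Type*} [NormedAddCommGroup E] [NormedSpace ℝ E]
    {s t : Set E} {m : ℝ} {φ : E → ℝ} (hφ : StrongConvexOn t m φ) (hst : s ⊆ t)
    (hs : Convex ℝ s) : StrongConvexOn s m φ :=
  ⟨hs, fun _ hx _ hy => hφ.2 (hst hx) (hst hy)⟩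

theorem StrongConvexOn.add_sq_norm_sub_le_of_isMinOn {E : Type*} [NormedAddCommGroup E]
    [NormedSpace ℝ E] {s : Set E} {m : ℝ} {φ : E → ℝ} {x z : E} (hφ : StrongConvexOn s m φ)
    (hx : x ∈ s) (hmin : IsMinOn φ s x) (hz : z ∈ s) :
    φ x + m / 2 * ‖z - x‖ ^ 2 ≤ φ z := by
  -- compare `x` with the points `(1 - t) • x + t • z` of the segment and let `t → 0`
  have hsegment : ∀ t ∈ Ioo (0 : ℝ) 1, φ x + (1 - t) * (m / 2 * ‖z - x‖ ^ 2) ≤ φ z := by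
    rintro t ⟨ht0, ht1⟩
    have hcomb := hφ.2 hx hz (sub_nonneg.2 ht1.le) ht0.le (sub_add_cancel 1 t)
    have hle := hmin (hφ.1 hx hz (sub_nonneg.2 ht1.le) ht0.le (sub_add_cancel 1 t))
    simp only [smul_eq_mul, norm_sub_rev x z] at hcomb
    refine le_of_mul_le_mul_left ?_ ht0
    linarith [show φ x ≤ φ ((1 - t) • x + t • z) from hle]
  generalize m / 2 * ‖z - x‖ ^ 2 = K at hsegment ⊢
  have hlim : Tendsto (fun t : ℝ => φ x + (1 - t) * K) (𝓝[>] 0) (𝓝 (φ x + (1 - 0) * K)) :=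
    (tendsto_const_nhds.add ((tendsto_const_nhds.sub tendsto_id).mul_const K)).mono_left
      nhdsWithin_le_nhds
  have hev : ∀ᶠ t in 𝓝[>] (0 : ℝ), φ x + (1 - t) * K ≤ φ z := by
    filter_upwards [Ioo_mem_nhdsGT one_pos] with t ht using hsegment t ht
  simpa using le_of_tendsto hlim hev

theorem convexOn_finset_sum {ι E : Type*} [AddCommMonoid E] [Module ℝ E] {s : Set E}
    (hs : Convex ℝ s) (t : Finset ι) {g : ι → E → ℝ} (hg : ∀ i ∈ t, ConvexOn ℝ s (g i)) :
    ConvexOn ℝ s fun x => ∑ i ∈ t, g i x := by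
  classical
  induction t using Finset.induction_on with
  | empty => simpa using convexOn_const (0 : ℝ) hs
  | insert a t ha ih =>
    simp_rw [Finset.sum_insert ha]
    exact (hg a (Finset.mem_insert_self a t)).add
      (ih fun i hi => hg i (Finset.mem_insert_of_mem hi))

theorem convexOn_const_mul_norm_comp {E F : Type*} [AddCommGroup E] [Module ℝ E]
    [SeminormedAddCommGroup F] [NormedSpace ℝ F] {c : ℝ} (hc : 0 ≤ c) (L : E →ₗ[ℝ] F) :
    ConvexOn ℝ univ fun x => c * ‖L x‖ :=
  ((convexOn_norm convex_univ).comp_linearMap L).smul hc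

open scoped Matrix.Norms.L2Operator in
theorem specNorm_eq_l2_opNorm {m n : Type*} [Fintype m] [Fintype n] [DecidableEq n]
    (A : Matrix m n ℝ) : specNorm A = ‖A‖ := by
  rw [Matrix.l2_opNorm_def, ← ContinuousLinearMap.sSup_unitClosedBall_eq_norm, specNorm]
  congr 1
  ext c
  simp only [sqnorm, mem_ofPred_eq, LinearEquiv.trans_apply, LinearMap.coe_toContinuousLinearMap',
    EuclideanSpace.norm_eq, Matrix.ofLp_toLpLin, Matrix.toLin'_apply, Real.norm_eq_abs, sq_abs,
    mem_image, Metric.mem_closedBall, dist_zero_right, Real.sqrt_le_one]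
  exact ⟨fun ⟨v, hv, hc⟩ => ⟨WithLp.toLp 2 v, hv, hc.symm⟩,
    fun ⟨x, hx, hc⟩ => ⟨x.ofLp, hx, hc.symm⟩⟩

theorem sqnorm_eq_norm_sq {ι : Type*} [Fintype ι] (v : ι → ℝ) :
    sqnorm v = ‖WithLp.toLp 2 v‖ ^ 2 := by
  simp [sqnorm, EuclideanSpace.norm_sq_eq]

open scoped Matrix.Norms.L2Operator in
theorem sqnorm_mulVec_le {m n : Type*} [Fintype m] [Fintype n] [DecidableEq n]
    (A : Matrix m n ℝ) (v : n → ℝ) : sqnorm (A *ᵥ v) ≤ specNorm A ^ 2 * sqnorm v := by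
  rw [specNorm_eq_l2_opNorm, sqnorm_eq_norm_sq, sqnorm_eq_norm_sq, ← mul_pow]
  exact pow_le_pow_left₀ (norm_nonneg _) (A.l2_opNorm_mulVec (WithLp.toLp 2 v)) 2

open scoped Matrix.Norms.L2Operator in
theorem specNorm_nonneg {m n : Type*} [Fintype m] [Fintype n] [DecidableEq n]
    (A : Matrix m n ℝ) : 0 ≤ specNorm A := by
  rw [specNorm_eq_l2_opNorm]
  exact norm_nonneg A

theorem abs_le_sqrt_sum_sq_column {m n : Type*} [Fintype m] (A : Matrix m n ℝ) (i : m) (k : n) :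
    |A i k| ≤ √(∑ i', A i' k ^ 2) :=
  Real.abs_le_sqrt (Finset.single_le_sum (fun i' _ => sq_nonneg (A i' k)) (Finset.mem_univ i))

section Model

variable {n p : ℕ} (W : Matrix (Fin n) (Fin (p + 1) × Fin p) ℝ) (y : Fin n → ℝ)
  {lb : Fin p → ℝ} {LPhi : Matrix (Fin p) (Fin p) ℝ} {lO : Fin p → ℝ} {τ : ℝ}

variable (lb LPhi lO) in
theorem continuous_fObj : Continuous (fObj W y lb LPhi lO) := by
  unfold fObj lossL Pen Matrix.mulVec dotProduct vecM
  fun_prop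

theorem isClosed_Sfeas : IsClosed (Sfeas p) := by
  simp only [Sfeas, Set.ofPred_forall]
  exact isClosed_iInter fun j => isClosed_iInter fun k => isClosed_eq (by fun_prop) (by fun_prop)

theorem convex_Sfeas : Convex ℝ (Sfeas p) := by
  intro A hA B hB a b _ _ _ j k
  simp only [Matrix.add_apply, Matrix.smul_apply, hA j k, hB j k]

theorem convexOn_Pen (hlb : ∀ j, 0 ≤ lb j) (hLPhi : ∀ j k, 0 ≤ LPhi j k)
    (hlO : ∀ k, 0 ≤ lO k) :
    ConvexOn ℝ univ (Pen lb LPhi lO) := by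
  let column (k : Fin p) : Matrix (Fin (p + 1)) (Fin p) ℝ →ₗ[ℝ] EuclideanSpace ℝ (Fin (p + 1)) :=
    (WithLp.linearEquiv 2 ℝ (Fin (p + 1) → ℝ)).symm.toLinearMap ∘ₗ
      LinearMap.pi fun i => Matrix.entryLinearMap ℝ ℝ i k
  have hcolumn (k : Fin p) (Ω : Matrix (Fin (p + 1)) (Fin p) ℝ) :
      ‖column k Ω‖ = √(∑ i, Ω i k ^ 2) := by
    simp [column, EuclideanSpace.norm_eq, Real.norm_eq_abs, sq_abs]
  have hb := convexOn_finset_sum convex_univ Finset.univ fun j _ =>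
    convexOn_const_mul_norm_comp (hlb j) (Matrix.entryLinearMap ℝ ℝ (0 : Fin (p + 1)) j)
  have hΦ := convexOn_finset_sum convex_univ Finset.univ fun j _ =>
    convexOn_finset_sum convex_univ Finset.univ fun k _ =>
      convexOn_const_mul_norm_comp (hLPhi j k) (Matrix.entryLinearMap ℝ ℝ k.succ j)
  have hΩ := convexOn_finset_sum convex_univ Finset.univ fun k _ =>
    convexOn_const_mul_norm_comp (hlO k) (column k)
  simp only [hcolumn] at hΩ
  exact (hb.add hΦ).add hΩ

theorem mul_abs_le_fObj (hlb : ∀ j, 0 ≤ lb j) (hLPhi : ∀ j k, 0 ≤ LPhi j k)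
    (hlO : ∀ k, 0 ≤ lO k) (Ω : Matrix (Fin (p + 1)) (Fin p) ℝ) (i : Fin (p + 1)) (k : Fin p) :
    lO k * |Ω i k| ≤ fObj W y lb LPhi lO Ω := by
  have hloss : 0 ≤ lossL W y Ω := by unfold lossL; positivity
  have hb : 0 ≤ ∑ j, lb j * |Ω 0 j| :=
    Finset.sum_nonneg fun j _ => mul_nonneg (hlb j) (abs_nonneg _)
  have hΦ : 0 ≤ ∑ j, ∑ k, LPhi j k * |Ω k.succ j| :=
    Finset.sum_nonneg fun j _ => Finset.sum_nonneg fun k _ => mul_nonneg (hLPhi j k) (abs_nonneg _)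
  have hcol : lO k * |Ω i k| ≤ ∑ k', lO k' * √(∑ i', Ω i' k' ^ 2) :=
    (mul_le_mul_of_nonneg_left (abs_le_sqrt_sum_sq_column Ω i k) (hlO k)).trans <|
      Finset.single_le_sum (f := fun k' => lO k' * √(∑ i', Ω i' k' ^ 2))
        (fun k' _ => mul_nonneg (hlO k') (Real.sqrt_nonneg _)) (Finset.mem_univ k)
  unfold fObj Pen
  linarith

theorem exists_isMinOn_fObj (hlb : ∀ j, 0 ≤ lb j) (hLPhi : ∀ j k, 0 ≤ LPhi j k)
    (hlO : ∀ k, 0 < lO k) : ∃ Ωm ∈ Sfeas p, IsMinOn (fObj W y lb LPhi lO) (Sfeas p) Ωm := by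
  set f₀ := fObj W y lb LPhi lO 0
  -- the sublevel set `{f < f 0}` lies in a box, because `λ_Ω > 0` bounds every entry
  let box : Set (Matrix (Fin (p + 1)) (Fin p) ℝ) :=
    univ.pi fun _ => univ.pi fun k => Icc (-(f₀ / lO k)) (f₀ / lO k)
  have hbox : IsCompact box := isCompact_univ_pi fun _ => isCompact_univ_pi fun _ => isCompact_Icc
  refine (continuous_fObj W y lb LPhi lO).continuousOn.exists_isMinOn' isClosed_Sfeas
    (x₀ := 0) (fun _ _ => rfl) ?_
  refine (hasBasis_cocompact.inf_principal _).eventually_iff.2 ⟨box, hbox, fun Ω hΩ => ?_⟩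
  by_contra! hlt
  refine hΩ.1 fun i _ k _ => abs_le.1 ((le_div_iff₀ (hlO k)).2 ?_)
  linarith [mul_abs_le_fObj W y hlb hLPhi (fun k => (hlO k).le) Ω i k]

section Frobenius

-- `‖·‖` on matrices is the Frobenius norm `‖·‖_F` of the paper.
attribute [local instance] Matrix.frobeniusNormedAddCommGroup Matrix.frobeniusNormedSpace

theorem frobenius_norm_sq_eq {m n : Type*} [Fintype m] [Fintype n] (A : Matrix m n ℝ) :
    ‖A‖ ^ 2 = ∑ i, ∑ j, A i j ^ 2 := by
  rw [Matrix.frobenius_norm_def, ← Real.sqrt_eq_rpow, Real.sq_sqrt (by positivity)]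
  simp [Real.norm_eq_abs, sq_abs]

theorem strongConvexOn_const_sub_sum_add_sum_sq {m n : Type*} [Fintype m] [Fintype n]
    (a c : ℝ) (G Ω₀ : Matrix m n ℝ) :
    StrongConvexOn univ c fun Ω : Matrix m n ℝ =>
      a - ∑ i, ∑ j, G i j * (Ω i j - Ω₀ i j) + c / 2 * ∑ i, ∑ j, (Ω i j - Ω₀ i j) ^ 2 := by
  refine ⟨convex_univ, fun X _ Y _ s t _ _ hst => le_of_eq ?_⟩
  obtain rfl : t = 1 - s := by linarith
  have hlin : ∑ i, ∑ j, G i j * ((s • X + (1 - s) • Y) i j - Ω₀ i j)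
      = s * ∑ i, ∑ j, G i j * (X i j - Ω₀ i j) + (1 - s) * ∑ i, ∑ j, G i j * (Y i j - Ω₀ i j) := by
    simp only [Finset.mul_sum, ← Finset.sum_add_distrib]
    exact Finset.sum_congr rfl fun i _ => Finset.sum_congr rfl fun j _ => by
      simp only [Matrix.add_apply, Matrix.smul_apply, smul_eq_mul]; ring
  have hquad : ∑ i, ∑ j, ((s • X + (1 - s) • Y) i j - Ω₀ i j) ^ 2
      = s * ∑ i, ∑ j, (X i j - Ω₀ i j) ^ 2 + (1 - s) * ∑ i, ∑ j, (Y i j - Ω₀ i j) ^ 2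
        - s * (1 - s) * ∑ i, ∑ j, (X i j - Y i j) ^ 2 := by
    simp only [Finset.mul_sum, ← Finset.sum_add_distrib, ← Finset.sum_sub_distrib]
    exact Finset.sum_congr rfl fun i _ => Finset.sum_congr rfl fun j _ => by
      simp only [Matrix.add_apply, Matrix.smul_apply, smul_eq_mul]; ring
  simp only [smul_eq_mul, frobenius_norm_sq_eq, Matrix.sub_apply]
  linear_combination -hlin + c / 2 * hquad

theorem sqnorm_vecM (A : Matrix (Fin (p + 1)) (Fin p) ℝ) : sqnorm (vecM A) = ‖A‖ ^ 2 := by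
  rw [frobenius_norm_sq_eq, sqnorm, Fintype.sum_prod_type]
  rfl

variable (lb LPhi lO τ) in
theorem gSur_eq (Ω Ω' : Matrix (Fin (p + 1)) (Fin p) ℝ) :
    gSur W y lb LPhi lO τ Ω Ω' = fObj W y lb LPhi lO Ω + τ ^ 2 / 2 * ‖Ω - Ω'‖ ^ 2
      - 1 / 2 * sqnorm (W *ᵥ vecM (Ω - Ω')) := by
  set r := fun i => y i - (W *ᵥ vecM Ω') i
  set d := W *ᵥ vecM (Ω - Ω')
  have hd : W *ᵥ vecM Ω = W *ᵥ vecM Ω' + d := by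
    rw [← Matrix.mulVec_add]
    congr 1
    ext u
    simp [vecM]
  have hcross : ∑ u, (Wᵀ *ᵥ r) u * (vecM Ω u - vecM Ω' u) = ∑ i, r i * d i := by
    change (Wᵀ *ᵥ r) ⬝ᵥ vecM (Ω - Ω') = r ⬝ᵥ d
    rw [Matrix.mulVec_transpose, Matrix.dotProduct_mulVec]
  have hloss : lossL W y Ω = lossL W y Ω' - ∑ i, r i * d i + 1 / 2 * sqnorm d := by
    simp only [lossL, sqnorm, hd, Finset.mul_sum, ← Finset.sum_sub_distrib,
      ← Finset.sum_add_distrib]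
    exact Finset.sum_congr rfl fun i _ => by simp only [Pi.add_apply, r]; ring
  rw [gSur, fObj, hcross, hloss, frobenius_norm_sq_eq]
  simp only [Matrix.sub_apply]
  ring

variable (lb LPhi lO) in
theorem fObj_le_gSur (hτ : specNorm W ≤ τ) (Ω Ω' : Matrix (Fin (p + 1)) (Fin p) ℝ) :
    fObj W y lb LPhi lO Ω ≤ gSur W y lb LPhi lO τ Ω Ω' := by
  have hW := sqnorm_mulVec_le W (vecM (Ω - Ω'))
  have hτ2 : specNorm W ^ 2 ≤ τ ^ 2 := pow_le_pow_left₀ (specNorm_nonneg W) hτ 2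
  rw [sqnorm_vecM] at hW
  rw [gSur_eq]
  nlinarith [mul_le_mul_of_nonneg_right hτ2 (sq_nonneg ‖Ω - Ω'‖)]

variable (lb LPhi lO τ) in
theorem gSur_le (Ω Ω' : Matrix (Fin (p + 1)) (Fin p) ℝ) :
    gSur W y lb LPhi lO τ Ω Ω' ≤ fObj W y lb LPhi lO Ω + τ ^ 2 / 2 * ‖Ω - Ω'‖ ^ 2 := by
  rw [gSur_eq, sqnorm_eq_norm_sq]
  nlinarith [sq_nonneg ‖WithLp.toLp 2 (W *ᵥ vecM (Ω - Ω'))‖]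

theorem strongConvexOn_gSur (hlb : ∀ j, 0 ≤ lb j) (hLPhi : ∀ j k, 0 ≤ LPhi j k)
    (hlO : ∀ k, 0 ≤ lO k) (Ω' : Matrix (Fin (p + 1)) (Fin p) ℝ) :
    StrongConvexOn univ (τ ^ 2) fun Ω => gSur W y lb LPhi lO τ Ω Ω' := by
  let G := Matrix.of fun i k => (Wᵀ *ᵥ fun l => y l - (W *ᵥ vecM Ω') l) (i, k)
  have h := (strongConvexOn_const_sub_sum_add_sum_sq (lossL W y Ω') (τ ^ 2) G Ω').add
    (convexOn_Pen hlb hLPhi hlO).uniformConvexOn_zero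
  rw [add_zero] at h
  have hsplit : (fun Ω => gSur W y lb LPhi lO τ Ω Ω') = (fun Ω => lossL W y Ω'
      - ∑ i, ∑ k, G i k * (Ω i k - Ω' i k) + τ ^ 2 / 2 * ∑ i, ∑ k, (Ω i k - Ω' i k) ^ 2)
      + Pen lb LPhi lO := by
    ext Ω
    simp [gSur, G, vecM, Fintype.sum_prod_type]
  rw [hsplit]
  exact h

theorem fObj_add_le_of_isMinOn_gSur (hlb : ∀ j, 0 ≤ lb j) (hLPhi : ∀ j k, 0 ≤ LPhi j k)
    (hlO : ∀ k, 0 ≤ lO k) (hτ : specNorm W ≤ τ) {M Ω' Z : Matrix (Fin (p + 1)) (Fin p) ℝ}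
    (hM : M ∈ Sfeas p) (hmin : IsMinOn (fun Ω => gSur W y lb LPhi lO τ Ω Ω') (Sfeas p) M)
    (hZ : Z ∈ Sfeas p) :
    fObj W y lb LPhi lO M + τ ^ 2 / 2 * ‖M - Z‖ ^ 2
      ≤ fObj W y lb LPhi lO Z + τ ^ 2 / 2 * ‖Ω' - Z‖ ^ 2 := by
  have hgrowth := ((strongConvexOn_gSur W y hlb hLPhi hlO Ω').subset (subset_univ _)
    convex_Sfeas).add_sq_norm_sub_le_of_isMinOn hM hmin hZ
  have hf := fObj_le_gSur W y lb LPhi lO hτ M Ω'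
  have hg := gSur_le W y lb LPhi lO τ Z Ω'
  rw [norm_sub_rev Z M] at hgrowth
  rw [norm_sub_rev Z Ω'] at hg
  linarith

theorem exists_isMinOn_tendsto_of_isMinOn_gSur (hlb : ∀ j, 0 ≤ lb j)
    (hLPhi : ∀ j k, 0 ≤ LPhi j k) (hlO : ∀ k, 0 ≤ lO k) (hτ : specNorm W < τ)
    {Ωs : ℕ → Matrix (Fin (p + 1)) (Fin p) ℝ} (hS : ∀ i, Ωs i ∈ Sfeas p)
    (hstep : ∀ i, IsMinOn (fun Ω => gSur W y lb LPhi lO τ Ω (Ωs i)) (Sfeas p) (Ωs (i + 1)))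
    (hmin : ∃ Ωm ∈ Sfeas p, IsMinOn (fObj W y lb LPhi lO) (Sfeas p) Ωm) :
    ∃ L ∈ Sfeas p, IsMinOn (fObj W y lb LPhi lO) (Sfeas p) L ∧ Tendsto Ωs atTop (𝓝 L) := by
  have hτ0 : 0 < τ := (specNorm_nonneg W).trans_lt hτ
  refine exists_isMinOn_tendsto_of_step (c := τ ^ 2 / 2) (by positivity)
    (continuous_fObj W y lb LPhi lO) isClosed_Sfeas hS (fun Z hZ i => ?_) hmin
  simpa only [dist_eq_norm] using
    fObj_add_le_of_isMinOn_gSur W y hlb hLPhi hlO hτ.le (hS (i + 1)) (hstep i) hZ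

end Frobenius

end Model

theorem gresh_global_convergence_general {n p : ℕ}
    (W : Matrix (Fin n) (Fin (p + 1) × Fin p) ℝ) (y : Fin n → ℝ)
    (lb : Fin p → ℝ) (hlb : ∀ j, 0 ≤ lb j)
    (LPhi : Matrix (Fin p) (Fin p) ℝ) (hLPhi : ∀ j k, 0 ≤ LPhi j k)
    (lO : Fin p → ℝ) (hlO : ∀ k, 0 < lO k)
    (τ : ℝ) (hτ : specNorm W < τ) :
    (∃ Ωm ∈ Sfeas p, ∀ Ω ∈ Sfeas p, fObj W y lb LPhi lO Ωm ≤ fObj W y lb LPhi lO Ω) ∧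
    (∀ Ωs : ℕ → Matrix (Fin (p + 1)) (Fin p) ℝ, Ωs 0 ∈ Sfeas p →
      (∀ i : ℕ, Ωs (i + 1) ∈ Sfeas p ∧
        ∀ Ω ∈ Sfeas p,
          gSur W y lb LPhi lO τ (Ωs (i + 1)) (Ωs i) ≤ gSur W y lb LPhi lO τ Ω (Ωs i)) →
      ∃ Ωstar : Matrix (Fin (p + 1)) (Fin p) ℝ,
        Ωstar ∈ Sfeas p ∧
        (∀ Ω ∈ Sfeas p, fObj W y lb LPhi lO Ωstar ≤ fObj W y lb LPhi lO Ω) ∧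
        Filter.Tendsto Ωs Filter.atTop (nhds Ωstar)) := by
  obtain ⟨Ωm, hΩm, hmin⟩ := exists_isMinOn_fObj W y hlb hLPhi hlO
  refine ⟨⟨Ωm, hΩm, isMinOn_iff.1 hmin⟩, fun Ωs h0 hstep => ?_⟩
  have hS : ∀ i, Ωs i ∈ Sfeas p
    | 0 => h0
    | i + 1 => (hstep i).1
  obtain ⟨L, hL, hLmin, hlim⟩ := exists_isMinOn_tendsto_of_isMinOn_gSur W y hlb hLPhi
    (fun k => (hlO k).le) hτ hS (fun i => isMinOn_iff.2 (hstep i).2) ⟨Ωm, hΩm, hmin⟩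
  exact ⟨L, hL, isMinOn_iff.1 hLmin, hlim⟩

/-- **Theorem 1 (global convergence of the GRESH iteration, exact inner step)**:
if every entry of `λ_Ω` is strictly positive and `τ > ‖W‖₂`, then `f` attains its
infimum over `𝒮`, and every sequence produced by exact minimization of the
surrogate `g(·, Ω^{(i)})` over `𝒮` converges to a global minimizer of `f` over `𝒮`. -/
theorem gresh_global_convergence {n p : ℕ} (hn : 1 ≤ n) (hp : 1 ≤ p)
    (W : Matrix (Fin n) (Fin (p + 1) × Fin p) ℝ) (y : Fin n → ℝ)
    (lb : Fin p → ℝ) (hlb : ∀ j, 0 ≤ lb j)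
    (LPhi : Matrix (Fin p) (Fin p) ℝ) (hLPhi : ∀ j k, 0 ≤ LPhi j k)
    (lO : Fin p → ℝ) (hlO : ∀ k, 0 < lO k)
    (τ : ℝ) (hτ : specNorm W < τ) :
    (∃ Ωm ∈ Sfeas p, ∀ Ω ∈ Sfeas p, fObj W y lb LPhi lO Ωm ≤ fObj W y lb LPhi lO Ω) ∧
    (∀ Ωs : ℕ → Matrix (Fin (p + 1)) (Fin p) ℝ, Ωs 0 ∈ Sfeas p →
      (∀ i : ℕ, Ωs (i + 1) ∈ Sfeas p ∧
        ∀ Ω ∈ Sfeas p,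
          gSur W y lb LPhi lO τ (Ωs (i + 1)) (Ωs i) ≤ gSur W y lb LPhi lO τ Ω (Ωs i)) →
      ∃ Ωstar : Matrix (Fin (p + 1)) (Fin p) ℝ,
        Ωstar ∈ Sfeas p ∧
        (∀ Ω ∈ Sfeas p, fObj W y lb LPhi lO Ωstar ≤ fObj W y lb LPhi lO Ω) ∧
        Filter.Tendsto Ωs Filter.atTop (nhds Ωstar)) :=
  gresh_global_convergence_general W y lb hlb LPhi hLPhi lO hlO τ hτ
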